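/- arXiv:2112.05630 — 2 statements merged into one kernel-verified Lean document; each statement's English description precedes it below -/
import Mathlib

section
/- Suppose σ̂_A > σ̂_B. Let θ be the unique real number satisfying p_A·(1 − Φ((θ − μ_A + β_A)/σ̂_A)) + p_B·(1 − Φ((θ − μ_B + β_B)/σ̂_B)) = α, and set x_A := 1 − Φ((θ − μ_A + β_A)/σ̂_A) and x_B := 1 − Φ((θ − μ_B + β_B)/σ̂_B) (the group-oblivious selection rates). Then x_A > x_B if and only if α < Φ((Δμ − Δβ)/Δσ̂). -/
noncomputable def gpdf (t : ℝ) : ℝ := Real.exp (-t ^ 2 / 2) / Real.sqrt (2 * Real.pi)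

noncomputable def gcdf (x : ℝ) : ℝ := ∫ t in Set.Iic x, gpdf t

noncomputable def gquant : ℝ → ℝ := Function.invFun gcdf

noncomputable def sHat (η σ : ℝ) : ℝ := Real.sqrt (η ^ 2 + σ ^ 2)

noncomputable def sTil (η σ : ℝ) : ℝ := η ^ 2 / sHat η σ

def Dset (pA α : ℝ) : Set ℝ :=
  {x | x ∈ Set.Ioo (0:ℝ) 1 ∧ (α - pA * x) / (1 - pA) ∈ Set.Ioo (0:ℝ) 1}

noncomputable def Qfun (pA α μA μB sA sB x : ℝ) : ℝ :=
  (1 / α) * (pA * (μA * x + sA * gpdf (gquant (1 - x)))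
    + (1 - pA) * (μB * ((α - pA * x) / (1 - pA))
      + sB * gpdf (gquant (1 - (α - pA * x) / (1 - pA)))))

noncomputable def clampTo (lo hi x : ℝ) : ℝ := min hi (max lo x)

lemma gpdf_pos (t : ℝ) : 0 < gpdf t := by
  unfold gpdf
  positivity

lemma integrable_gpdf : MeasureTheory.Integrable gpdf := by
  have h := integrable_exp_neg_mul_sq (b := (1/2 : ℝ)) (by norm_num)
  have := h.div_const (Real.sqrt (2 * Real.pi))
  refine this.congr ?_
  filter_upwards with t
  unfold gpdf
  ring_nf

lemma integral_gpdf : ∫ t, gpdf t = 1 := by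
  unfold gpdf
  rw [MeasureTheory.integral_div]
  have h : ∫ t : ℝ, Real.exp (-t ^ 2 / 2) = Real.sqrt (Real.pi / (1/2)) := by
    rw [← integral_gaussian (1/2)]
    congr 1 with t
    ring_nf
  rw [h]
  rw [div_eq_one_iff_eq (by positivity)]
  congr 1
  ring

lemma gcdf_strictMono : StrictMono gcdf := by
  intro x y hxy
  have h := intervalIntegral.integral_Iic_sub_Iic
    (f := gpdf) (μ := MeasureTheory.volume) (a := x) (b := y)
    integrable_gpdf.integrableOn integrable_gpdf.integrableOn
  have hpos : 0 < ∫ t in x..y, gpdf t :=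
    intervalIntegral.intervalIntegral_pos_of_pos
      (integrable_gpdf.intervalIntegrable) (fun t => gpdf_pos t) hxy
  have : gcdf y - gcdf x = ∫ t in x..y, gpdf t := h
  linarith

lemma gcdf_add_neg (x : ℝ) : gcdf x + gcdf (-x) = 1 := by
  have heven : ∀ t : ℝ, gpdf (-t) = gpdf t := by
    intro t; unfold gpdf; ring_nf
  have h1 : gcdf (-x) = ∫ t in Set.Ioi x, gpdf t := by
    unfold gcdf
    rw [show (∫ t in Set.Iic (-x), gpdf t) = ∫ t in Set.Iic (-x), gpdf (-t) by
      simp only [heven]]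
    rw [integral_comp_neg_Iic]
    simp
  rw [h1]
  unfold gcdf
  rw [intervalIntegral.integral_Iic_add_Ioi integrable_gpdf.integrableOn
    integrable_gpdf.integrableOn]
  exact integral_gpdf

/-- the group-oblivious algorithm overrepresents the high-variance
group `A` exactly for budgets `α < Φ((Δμ − Δβ)/Δσ̂)`. -/
theorem stmt0 (pA α μA μB ηA ηB σA σB βA βB θ : ℝ)
    (hpA : pA ∈ Set.Ioo (0:ℝ) 1) (hα : α ∈ Set.Ioo (0:ℝ) 1)
    (hηA : 0 < ηA) (hηB : 0 < ηB) (hσA : 0 < σA) (hσB : 0 < σB)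
    (hvar : sHat ηB σB < sHat ηA σA)
    (hθ : pA * (1 - gcdf ((θ - μA + βA) / sHat ηA σA))
        + (1 - pA) * (1 - gcdf ((θ - μB + βB) / sHat ηB σB)) = α) :
    1 - gcdf ((θ - μB + βB) / sHat ηB σB) < 1 - gcdf ((θ - μA + βA) / sHat ηA σA)
      ↔ α < gcdf (((μA - μB) - (βA - βB)) / (sHat ηA σA - sHat ηB σB)) := by
  obtain ⟨hp0, hp1⟩ := hpA
  set sA := sHat ηA σA with hsAdef
  set sB := sHat ηB σB with hsBdef
  have hsA : 0 < sA := Real.sqrt_pos.2 (by positivity)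
  have hsB : 0 < sB := Real.sqrt_pos.2 (by positivity)
  have hs : 0 < sA - sB := by linarith
  set tA := (θ - μA + βA) / sA with htA
  set tB := (θ - μB + βB) / sB with htB
  set c := ((μA - μB) - (βA - βB)) / (sA - sB) with hc
  have hmono := gcdf_strictMono
  have hsym := gcdf_add_neg c
  -- key algebraic equivalences
  have e1 : tA < tB ↔ -c < tA := by
    rw [htA, htB, hc, ← neg_div, div_lt_div_iff₀ hsA hsB, div_lt_div_iff₀ hs hsA]
    constructor <;> intro h <;> nlinarith
  have e2 : tA < tB ↔ -c < tB := by
    rw [htA, htB, hc, ← neg_div, div_lt_div_iff₀ hsA hsB, div_lt_div_iff₀ hs hsB]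
    constructor <;> intro h <;> nlinarith
  constructor
  · intro h
    have hlt : tA < tB := hmono.lt_iff_lt.1 (by linarith : gcdf tA < gcdf tB)
    have h1 : gcdf (-c) < gcdf tA := hmono (e1.1 hlt)
    have h2 : gcdf (-c) < gcdf tB := hmono (e2.1 hlt)
    have e5 : pA * (1 - gcdf tA) + (1 - pA) * (1 - gcdf tB)
        - (1 - gcdf (-c))
        = -(pA * (gcdf tA - gcdf (-c)) + (1 - pA) * (gcdf tB - gcdf (-c))) := by ring
    linarith [mul_pos hp0 (sub_pos.2 h1),
      mul_pos (by linarith : (0:ℝ) < 1 - pA) (sub_pos.2 h2)]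
  · intro h
    by_contra hcon
    push_neg at hcon
    have hle : gcdf tB ≤ gcdf tA := by linarith
    have htle : tB ≤ tA := hmono.le_iff_le.1 hle
    have e3 : tB < tA ↔ tA < -c := by
      rw [htA, htB, hc, ← neg_div, div_lt_div_iff₀ hsB hsA, div_lt_div_iff₀ hsA hs]
      constructor <;> intro h <;> nlinarith
    have e4 : tB < tA ↔ tB < -c := by
      rw [htA, htB, hc, ← neg_div, div_lt_div_iff₀ hsB hsA, div_lt_div_iff₀ hsB hs]
      constructor <;> intro h <;> nlinarith
    rcases eq_or_lt_of_le htle with heq | hlt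
    · have hn1 : ¬ (-c < tA) := fun hh => absurd (e1.2 hh) (by rw [heq]; exact lt_irrefl _)
      have hn2 : ¬ (tA < -c) := fun hh => absurd (e3.2 hh) (by rw [heq]; exact lt_irrefl _)
      have hAc : tA = -c := le_antisymm (not_lt.1 hn1) (not_lt.1 hn2)
      rw [heq, hAc] at hθ
      have e5 : pA * (1 - gcdf (-c)) + (1 - pA) * (1 - gcdf (-c)) = 1 - gcdf (-c) := by ring
      linarith
    · have h1 : gcdf tA < gcdf (-c) := hmono (e3.1 hlt)
      have h2 : gcdf tB < gcdf (-c) := hmono (e4.1 hlt)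
      have e5 : pA * (1 - gcdf tA) + (1 - pA) * (1 - gcdf tB)
          - (1 - gcdf (-c))
          = pA * (gcdf (-c) - gcdf tA) + (1 - pA) * (gcdf (-c) - gcdf tB) := by ring
      linarith [mul_pos hp0 (sub_pos.2 h1),
        mul_pos (by linarith : (0:ℝ) < 1 - pA) (sub_pos.2 h2)]
end

section
/- Suppose σ̃_A < σ̃_B. Let θ̃ be the unique real number satisfying p_A·(1 − Φ((θ̃ − μ_A)/σ̃_A)) + p_B·(1 − Φ((θ̃ − μ_B)/σ̃_B)) = α, and set x_A := 1 − Φ((θ̃ − μ_A)/σ̃_A) and x_B := 1 − Φ((θ̃ − μ_B)/σ̃_B) (the Bayesian-optimal selection rates). Then x_A < x_B if and only if α < Φ(Δμ/Δσ̃). -/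
lemma gpdf_neg (t : ℝ) : gpdf (-t) = gpdf t := by
  unfold gpdf; rw [neg_sq]

lemma gpdf_eq_gaussian : gpdf = fun t => Real.exp (-(1 / 2) * t ^ 2) / Real.sqrt (2 * Real.pi) := by
  funext t; unfold gpdf; ring_nf

lemma gcdf_neg (x : ℝ) : gcdf (-x) = 1 - gcdf x := by
  have htail : gcdf (-x) = ∫ t in Set.Ioi x, gpdf t := by
    rw [gcdf, ← integral_comp_neg_Ioi]
    simp only [gpdf_neg]
  have hsplit : gcdf x + ∫ t in Set.Ioi x, gpdf t = 1 :=
    integral_gpdf ▸ intervalIntegral.integral_Iic_add_Ioi integrable_gpdf.integrableOn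
      integrable_gpdf.integrableOn
  linarith

lemma sTil_pos {η : ℝ} (hη : η ≠ 0) (σ : ℝ) : 0 < sTil η σ := by
  unfold sTil sHat
  positivity

noncomputable def crossing (μA μB sA sB : ℝ) : ℝ := (sB * μA - sA * μB) / (sB - sA)

section Crossing

variable {μA μB sA sB : ℝ}

lemma standardize_crossing_left (hsA : sA ≠ 0) (hs : sA ≠ sB) :
    (crossing μA μB sA sB - μA) / sA = (μA - μB) / (sB - sA) := by
  have : sB - sA ≠ 0 := sub_ne_zero.2 hs.symm
  unfold crossing; field_simp; ring

lemma standardize_crossing_right (hsB : sB ≠ 0) (hs : sA ≠ sB) :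
    (crossing μA μB sA sB - μB) / sB = (μA - μB) / (sB - sA) := by
  have : sB - sA ≠ 0 := sub_ne_zero.2 hs.symm
  unfold crossing; field_simp; ring

lemma standardize_lt_standardize_iff (hsA : 0 < sA) (hs : sA < sB) (θ : ℝ) :
    (θ - μB) / sB < (θ - μA) / sA ↔ crossing μA μB sA sB < θ := by
  have hsB : 0 < sB := hsA.trans hs
  rw [div_lt_div_iff₀ hsB hsA, crossing, div_lt_iff₀ (sub_pos.2 hs)]
  constructor <;> intro <;> nlinarith

end Crossing

lemma tail_strictAnti {μ s : ℝ} (hs : 0 < s) : StrictAnti fun θ => 1 - gcdf ((θ - μ) / s) :=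
  fun _ _ hxy => sub_lt_sub_left (gcdf_strictMono (div_lt_div_of_pos_right (by linarith) hs)) 1

theorem stmt1_general (pA α μA μB ηA ηB σA σB θt : ℝ)
    (hpA : pA ∈ Set.Ioo (0:ℝ) 1)
    (hηA : 0 < ηA)
    (hvar : sTil ηA σA < sTil ηB σB)
    (hθt : pA * (1 - gcdf ((θt - μA) / sTil ηA σA))
        + (1 - pA) * (1 - gcdf ((θt - μB) / sTil ηB σB)) = α) :
    1 - gcdf ((θt - μA) / sTil ηA σA) < 1 - gcdf ((θt - μB) / sTil ηB σB)
      ↔ α < gcdf ((μA - μB) / (sTil ηA σA - sTil ηB σB)) := by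
  set sA := sTil ηA σA
  set sB := sTil ηB σB
  have hsA : 0 < sA := sTil_pos hηA.ne' σA
  have hsB : 0 < sB := hsA.trans hvar
  have hrate : StrictAnti fun θ => pA * (1 - gcdf ((θ - μA) / sA))
      + (1 - pA) * (1 - gcdf ((θ - μB) / sB)) :=
    ((tail_strictAnti hsA).const_mul hpA.1).add ((tail_strictAnti hsB).const_mul (sub_pos.2 hpA.2))
  have hrate_crossing : gcdf ((μA - μB) / (sA - sB)) =
      pA * (1 - gcdf ((crossing μA μB sA sB - μA) / sA))
        + (1 - pA) * (1 - gcdf ((crossing μA μB sA sB - μB) / sB)) := by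
    rw [standardize_crossing_left hsA.ne' hvar.ne, standardize_crossing_right hsB.ne' hvar.ne,
      ← neg_sub sB sA, div_neg, gcdf_neg]
    ring
  rw [sub_lt_sub_iff_left, gcdf_strictMono.lt_iff_lt, standardize_lt_standardize_iff hsA hvar,
    hrate_crossing, ← hθt, hrate.lt_iff_gt]

/-- the Bayesian-optimal algorithm underrepresents group `A`
(with smaller posterior variance `σ̃_A < σ̃_B`) exactly for budgets `α < Φ(Δμ/Δσ̃)`. -/
theorem stmt1 (pA α μA μB ηA ηB σA σB θt : ℝ)
    (hpA : pA ∈ Set.Ioo (0:ℝ) 1) (hα : α ∈ Set.Ioo (0:ℝ) 1)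
    (hηA : 0 < ηA) (hηB : 0 < ηB) (hσA : 0 < σA) (hσB : 0 < σB)
    (hvar : sTil ηA σA < sTil ηB σB)
    (hθt : pA * (1 - gcdf ((θt - μA) / sTil ηA σA))
        + (1 - pA) * (1 - gcdf ((θt - μB) / sTil ηB σB)) = α) :
    1 - gcdf ((θt - μA) / sTil ηA σA) < 1 - gcdf ((θt - μB) / sTil ηB σB)
      ↔ α < gcdf ((μA - μB) / (sTil ηA σA - sTil ηB σB)) :=
  stmt1_general pA α μA μB ηA ηB σA σB θt hpA hηA hvar hθt
end
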